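/- arXiv:1810.12161 — 2 statements merged into one kernel-verified Lean document; each statement's English description precedes it below -/
import Mathlib

section
/- Fix integers n ≥ 1, p ≥ 0, K ≥ 2, vectors x_i ∈ ℝ^p for i = 1, …, n with the convention x_{i0} = 1 (so x̃_i = (1, x_{i1}, …, x_{ip}) ∈ ℝ^{p+1}), and current parameters w_k^{[s]} = (w_{k0}^{[s]}, …, w_{kp}^{[s]}) ∈ ℝ^{p+1} for k = 1, …, K-1. Set C_i^m = 1 + ∑_{k=1}^{K-1} exp(∑_{j=0}^{p} x_{ij} w_{kj}^{[s]}) and π_k(x_i; w^{[s]}) = exp(∑_{j=0}^{p} x_{ij} w_{kj}^{[s]}) / C_i^m. Then for every choice of parameters w_k = (w_{k0}, …, w_{kp}) ∈ ℝ^{p+1}, k = 1, …, K-1, one has I_1(w) := -∑_{i=1}^{n} log(1 + ∑_{k=1}^{K-1} exp(∑_{j=0}^{p} x_{ij} w_{kj})) ≥ G_1(w | w^{[s]}) := ∑_{i=1}^{n} [ -∑_{k=1}^{K-1} (π_k(x_i; w^{[s]})/(p+1)) ∑_{j=0}^{p} exp((p+1) x_{ij}(w_{kj} - w_{kj}^{[s]}))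 - log C_i^m + 1 - 1/C_i^m ], and equality holds when w_k = w_k^{[s]} for all k = 1, …, K-1. That is, G_1(· | w^{[s]}) is a minorizing function of I_1 at w^{[s]}. -/
/-!
Two elementary convexity bounds give the minorizer, observation by observation. The concavity of
`log` at `C_i^m` (`log y ≤ log c + y / c - 1`) linearizes `-log(1 + ∑ₖ e^{aₖ})`, and each
`e^{aₖ} / C_i^m` equals `πₖ · e^{aₖ - bₖ}` with `bₖ` the current linear predictor. Writing
`aₖ - bₖ = ∑ⱼ (1/(p+1)) · (p+1) x_{ij} (w_{kj} - w_{kj}^{[s]})`, Jensen's inequality for `exp`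
separates the coordinates. Both bounds are tight at `w = w^{[s]}`.
-/

open Finset

namespace Real

lemma exp_sum_le_sum_exp_card_mul_div_card {ι : Type*} [Fintype ι] [Nonempty ι] (a : ι → ℝ) :
    exp (∑ j, a j) ≤ (∑ j, exp (Fintype.card ι * a j)) / Fintype.card ι := by
  have hcard : (0 : ℝ) < Fintype.card ι := by exact_mod_cast Fintype.card_pos
  have hjensen := convexOn_exp.map_sum_le (t := univ) (w := fun _ => (Fintype.card ι : ℝ)⁻¹)
    (p := fun j => Fintype.card ι * a j) (fun _ _ => by positivity)
    (by simp [hcard.ne']) (fun _ _ => trivial)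
  simpa [smul_eq_mul, ← mul_assoc, hcard.ne', inv_mul_eq_div, ← sum_div] using hjensen

lemma log_le_log_add_div_sub_one {y c : ℝ} (hy : 0 < y) (hc : 0 < c) :
    log y ≤ log c + y / c - 1 := by
  have h := log_le_sub_one_of_pos (div_pos hy hc)
  rw [log_div hy.ne' hc.ne'] at h
  linarith

section LogSumExp

variable {κ : Type*} [Fintype κ] (a b : κ → ℝ) {C : ℝ}

lemma one_add_sum_exp_pos (hC : C = 1 + ∑ k, exp (b k)) : 0 < C :=
  hC ▸ add_pos_of_pos_of_nonneg one_pos (sum_nonneg fun _ _ => (exp_pos _).le)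

lemma neg_log_one_add_sum_exp_ge (hC : C = 1 + ∑ k, exp (b k)) :
    -(∑ k, exp (b k) / C * exp (a k - b k)) - log C + 1 - 1 / C ≤
      -log (1 + ∑ k, exp (a k)) := by
  have hCpos := one_add_sum_exp_pos b hC
  have hfactor : ∀ k, exp (b k) / C * exp (a k - b k) = exp (a k) / C := fun k => by
    rw [div_mul_eq_mul_div, ← exp_add, add_sub_cancel]
  have htangent := log_le_log_add_div_sub_one (one_add_sum_exp_pos a rfl) hCpos
  simp only [hfactor, ← sum_div, add_div] at htangent ⊢
  linarith

lemma neg_log_one_add_sum_exp_self (hC : C = 1 + ∑ k, exp (b k)) :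
    -(∑ k, exp (b k) / C) - log C + 1 - 1 / C = -log C := by
  have hCpos := one_add_sum_exp_pos b hC
  have hsum : ∑ k, exp (b k) = C - 1 := by rw [hC]; ring
  rw [← sum_div, hsum, sub_div, div_self hCpos.ne']
  ring

end LogSumExp

end Real

lemma exp_sum_mul_sub_sum_mul_le {p : ℕ} (x u v : Fin (p + 1) → ℝ) :
    Real.exp (∑ j, x j * u j - ∑ j, x j * v j) ≤
      (∑ j, Real.exp ((p + 1 : ℝ) * x j * (u j - v j))) / (p + 1) := by
  have h := Real.exp_sum_le_sum_exp_card_mul_div_card fun j => x j * (u j - v j)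
  simp only [Fintype.card_fin, Nat.cast_add, Nat.cast_one, ← mul_assoc] at h
  simpa only [← sum_sub_distrib, mul_sub] using h

open Finset in
theorem minorization_I1_general (n p K : ℕ)
    (x : Fin n → Fin (p + 1) → ℝ)
    (ws : Fin (K - 1) → Fin (p + 1) → ℝ)
    (C : Fin n → ℝ)
    (hC : ∀ i, C i = 1 + ∑ k, Real.exp (∑ j, x i j * ws k j))
    (gate : Fin n → Fin (K - 1) → ℝ)
    (hgate : ∀ i k, gate i k = Real.exp (∑ j, x i j * ws k j) / C i) :
    (∀ w : Fin (K - 1) → Fin (p + 1) → ℝ,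
      (-∑ i, Real.log (1 + ∑ k, Real.exp (∑ j, x i j * w k j))) ≥
        ∑ i, (-(∑ k, (gate i k / (p + 1 : ℝ)) *
              ∑ j, Real.exp ((p + 1 : ℝ) * x i j * (w k j - ws k j)))
            - Real.log (C i) + 1 - 1 / C i)) ∧
    ((-∑ i, Real.log (1 + ∑ k, Real.exp (∑ j, x i j * ws k j))) =
        ∑ i, (-(∑ k, (gate i k / (p + 1 : ℝ)) *
              ∑ j, Real.exp ((p + 1 : ℝ) * x i j * (ws k j - ws k j)))
            - Real.log (C i) + 1 - 1 / C i)) := by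
  have hgate_nonneg : ∀ i k, 0 ≤ gate i k := fun i k =>
    hgate i k ▸ div_nonneg (Real.exp_pos _).le (Real.one_add_sum_exp_pos _ (hC i)).le
  refine ⟨fun w => ?_, ?_⟩
  · rw [ge_iff_le, ← sum_neg_distrib]
    refine sum_le_sum fun i _ => le_trans ?_ (Real.neg_log_one_add_sum_exp_ge _ _ (hC i))
    have hcoord : ∀ k, gate i k * Real.exp (∑ j, x i j * w k j - ∑ j, x i j * ws k j) ≤
        gate i k / (p + 1 : ℝ) * ∑ j, Real.exp ((p + 1 : ℝ) * x i j * (w k j - ws k j)) :=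
      fun k => by
        rw [div_mul_eq_mul_div, mul_div_assoc]
        exact mul_le_mul_of_nonneg_left (exp_sum_mul_sub_sum_mul_le _ _ _) (hgate_nonneg i k)
    simp only [← hgate]
    linarith [sum_le_sum fun k (_ : k ∈ univ) => hcoord k]
  · rw [← sum_neg_distrib]
    refine sum_congr rfl fun i _ => ?_
    have hp : (p + 1 : ℝ) ≠ 0 := by positivity
    simp only [sub_self, mul_zero, Real.exp_zero, sum_const, card_univ, Fintype.card_fin,
      nsmul_eq_mul, mul_one, Nat.cast_add, Nat.cast_one, div_mul_cancel₀ _ hp, hgate, ← hC i]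
    exact (Real.neg_log_one_add_sum_exp_self _ (hC i)).symm

open Finset in
/-- The function `G₁(· | w^{[s]})` is a minorizing function of
`I₁(w) = -∑ᵢ log(1 + ∑ₖ exp(∑ⱼ x_{ij} w_{kj}))` at the current parameters
`w^{[s]}`: the inequality `I₁(w) ≥ G₁(w | w^{[s]})` holds for all `w`, with
equality at `w = w^{[s]}`.  Here `C_i^m = 1 + ∑ₖ exp(∑ⱼ x_{ij} w_{kj}^{[s]})`
and `π_k(x_i; w^{[s]}) = exp(∑ⱼ x_{ij} w_{kj}^{[s]}) / C_i^m`, with the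
convention `x_{i0} = 1`. -/
theorem minorization_I1 (n p K : ℕ) (hn : 1 ≤ n) (hK : 2 ≤ K)
    (x : Fin n → Fin (p + 1) → ℝ) (hx : ∀ i, x i 0 = 1)
    (ws : Fin (K - 1) → Fin (p + 1) → ℝ)
    (C : Fin n → ℝ)
    (hC : ∀ i, C i = 1 + ∑ k, Real.exp (∑ j, x i j * ws k j))
    (gate : Fin n → Fin (K - 1) → ℝ)
    (hgate : ∀ i k, gate i k = Real.exp (∑ j, x i j * ws k j) / C i) :
    (∀ w : Fin (K - 1) → Fin (p + 1) → ℝ,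
      (-∑ i, Real.log (1 + ∑ k, Real.exp (∑ j, x i j * w k j))) ≥
        ∑ i, (-(∑ k, (gate i k / (p + 1 : ℝ)) *
              ∑ j, Real.exp ((p + 1 : ℝ) * x i j * (w k j - ws k j)))
            - Real.log (C i) + 1 - 1 / C i)) ∧
    ((-∑ i, Real.log (1 + ∑ k, Real.exp (∑ j, x i j * ws k j))) =
        ∑ i, (-(∑ k, (gate i k / (p + 1 : ℝ)) *
              ∑ j, Real.exp ((p + 1 : ℝ) * x i j * (ws k j - ws k j)))
            - Real.log (C i) + 1 - 1 / C i)) :=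
  minorization_I1_general n p K x ws C hC gate hgate
end

section
/- Fix integers p ≥ 0 and K ≥ 2, a vector x ∈ ℝ^p with the convention x_0 = 1 (so x̃ = (1, x_1, …, x_p) ∈ ℝ^{p+1}), and current parameters w_k^{[s]} ∈ ℝ^{p+1} for k = 1, …, K-1. Set C^m = 1 + ∑_{k=1}^{K-1} exp(∑_{j=0}^{p} x_j w_{kj}^{[s]}) and π_k = exp(∑_{j=0}^{p} x_j w_{kj}^{[s]}) / C^m. Then for every w_k ∈ ℝ^{p+1}, k = 1, …, K-1, one has -log(1 + ∑_{k=1}^{K-1} exp(∑_{j=0}^{p} x_j w_{kj})) ≥ -log C^m + 1 - 1/C^m - ∑_{k=1}^{K-1} π_k · exp(∑_{j=0}^{p} x_j w_{kj} - ∑_{j=0}^{p} x_j w_{kj}^{[s]}), with equality when w_k = w_k^{[s]} for all k. -/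
/-!
Concavity of `log` puts its graph below every tangent line: `log a ≤ log c + a / c - 1`.
Take `a = 1 + ∑ₖ exp(sₖ(w))` with `sₖ(w) = ∑ⱼ x_j w_{kj}`, and `c = C`. The weights
`πₖ = exp(sₖ(w^{[s]})) / C` turn the tangent term `a / c` into `1 / C + ∑ₖ πₖ exp(sₖ(w) - sₖ(w^{[s]}))`, and at `w = w^{[s]}`
we have `a = C`, where the tangent line touches the graph.
-/

open Finset Real

theorem Real.log_le_log_add_div_sub_one_s3 {a c : ℝ} (ha : 0 < a) (hc : 0 < c) :
    log a ≤ log c + a / c - 1 := by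
  have h := log_le_sub_one_of_pos (div_pos ha hc)
  rw [log_div ha.ne' hc.ne'] at h
  linarith

theorem Finset.sum_exp_div_mul_exp_sub {ι : Type*} (s : Finset ι) (f g : ι → ℝ) (c : ℝ) :
    ∑ k ∈ s, exp (f k) / c * exp (g k - f k) = (∑ k ∈ s, exp (g k)) / c := by
  rw [sum_div]
  refine sum_congr rfl fun k _ => ?_
  rw [div_mul_eq_mul_div, ← exp_add, add_sub_cancel]

theorem minorization_single_obs_general (p K : ℕ)
    (x : Fin (p + 1) → ℝ)
    (ws : Fin (K - 1) → Fin (p + 1) → ℝ)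
    (C : ℝ) (hC : C = 1 + ∑ k, Real.exp (∑ j, x j * ws k j))
    (gate : Fin (K - 1) → ℝ)
    (hgate : ∀ k, gate k = Real.exp (∑ j, x j * ws k j) / C) :
    (∀ w : Fin (K - 1) → Fin (p + 1) → ℝ,
      (-Real.log (1 + ∑ k, Real.exp (∑ j, x j * w k j))) ≥
        -Real.log C + 1 - 1 / C -
          ∑ k, gate k * Real.exp ((∑ j, x j * w k j) - ∑ j, x j * ws k j)) ∧
    ((-Real.log (1 + ∑ k, Real.exp (∑ j, x j * ws k j))) =
        -Real.log C + 1 - 1 / C -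
          ∑ k, gate k * Real.exp ((∑ j, x j * ws k j) - ∑ j, x j * ws k j)) := by
  have hC_pos : 0 < C := hC ▸ by positivity
  have hgate_sum : ∀ w : Fin (K - 1) → Fin (p + 1) → ℝ,
      ∑ k, gate k * exp ((∑ j, x j * w k j) - ∑ j, x j * ws k j) =
        (∑ k, exp (∑ j, x j * w k j)) / C := fun w => by
    simp only [hgate]
    exact sum_exp_div_mul_exp_sub _ _ _ C
  refine ⟨fun w => ?_, ?_⟩
  · have h_tangent := log_le_log_add_div_sub_one_s3
      (a := 1 + ∑ k, exp (∑ j, x j * w k j)) (by positivity) hC_pos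
    rw [add_div] at h_tangent
    rw [hgate_sum]
    linarith
  · have h_sum : ∑ k, exp (∑ j, x j * ws k j) = C - 1 := by linarith
    rw [hgate_sum, h_sum, add_sub_cancel]
    field_simp
    ring

open Finset in
/-- Tangent-line minorization of the negative log-partition term of a single
observation: with `C^m = 1 + ∑ₖ exp(∑ⱼ x_j w_{kj}^{[s]})` and
`π_k = exp(∑ⱼ x_j w_{kj}^{[s]}) / C^m` (convention `x₀ = 1`), for every `w`,
`-log(1 + ∑ₖ exp(∑ⱼ x_j w_{kj})) ≥ -log C^m + 1 - 1/C^m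
  - ∑ₖ π_k exp(∑ⱼ x_j w_{kj} - ∑ⱼ x_j w_{kj}^{[s]})`,
with equality when `w = w^{[s]}`. -/
theorem minorization_single_obs (p K : ℕ) (hK : 2 ≤ K)
    (x : Fin (p + 1) → ℝ) (hx : x 0 = 1)
    (ws : Fin (K - 1) → Fin (p + 1) → ℝ)
    (C : ℝ) (hC : C = 1 + ∑ k, Real.exp (∑ j, x j * ws k j))
    (gate : Fin (K - 1) → ℝ)
    (hgate : ∀ k, gate k = Real.exp (∑ j, x j * ws k j) / C) :
    (∀ w : Fin (K - 1) → Fin (p + 1) → ℝ,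
      (-Real.log (1 + ∑ k, Real.exp (∑ j, x j * w k j))) ≥
        -Real.log C + 1 - 1 / C -
          ∑ k, gate k * Real.exp ((∑ j, x j * w k j) - ∑ j, x j * ws k j)) ∧
    ((-Real.log (1 + ∑ k, Real.exp (∑ j, x j * ws k j))) =
        -Real.log C + 1 - 1 / C -
          ∑ k, gate k * Real.exp ((∑ j, x j * ws k j) - ∑ j, x j * ws k j)) :=
  minorization_single_obs_general p K x ws C hC gate hgate
end
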